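/- Let V be a real normed vector space, λ ≥ 0, and n ≥ 1 a natural number. Let a : {0,…,n} → V, b : {0,…,n} → V, and r : {1,…,n} → V be such that for every k with 1 ≤ k ≤ n, ‖a(k−1) + r(k) − a(k)‖ ≤ λ and ‖b(k−1) + r(k) − b(k)‖ ≤ λ, and suppose a(n) = b(n). Then ‖a(0) − b(0)‖ ≤ 2·n·λ. -/
import Mathlib


/-- General recursive form of Proposition 1 (Discrepancy Bound): two chains
of entity embeddings `a` and `b` connected step by step by common relation
embeddings `r` under the TransE margin constraint with margin `lam`, whose
endpoints coincide after `n ≥ 1` steps, have initial discrepancy at most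
`2 * n * lam`. -/
theorem discrepancy_bound_recursive
    {V : Type*} [NormedAddCommGroup V] [NormedSpace ℝ V]
    (lam : ℝ) (hlam : 0 ≤ lam) (n : ℕ) (hn : 1 ≤ n)
    (a b : ℕ → V) (r : ℕ → V)
    (ha : ∀ k, 1 ≤ k → k ≤ n → ‖a (k - 1) + r k - a k‖ ≤ lam)
    (hb : ∀ k, 1 ≤ k → k ≤ n → ‖b (k - 1) + r k - b k‖ ≤ lam)
    (hend : a n = b n) :
    ‖a 0 - b 0‖ ≤ 2 * n * lam := by
  have key : ∀ m, m ≤ n → ‖a (n - m) - b (n - m)‖ ≤ 2 * m * lam := by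
    intro m
    induction m with
    | zero => intro _; simp [hend]
    | succ m ih =>
      intro hm
      have hm' : m ≤ n := Nat.le_of_succ_le hm
      have hk1 : 1 ≤ n - m := Nat.le_sub_of_add_le (by omega)
      have hkn : n - m ≤ n := Nat.sub_le _ _
      have h1 := ha (n - m) hk1 hkn
      have h2 := hb (n - m) hk1 hkn
      have h3 := ih hm'
      have hidx : n - m - 1 = n - (m + 1) := by omega
      rw [hidx] at h1 h2
      have : a (n - (m+1)) - b (n - (m+1)) =
          (a (n - (m+1)) + r (n - m) - a (n - m))
          - (b (n - (m+1)) + r (n - m) - b (n - m))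
          + (a (n - m) - b (n - m)) := by abel
      calc ‖a (n - (m+1)) - b (n - (m+1))‖
          ≤ ‖a (n - (m+1)) + r (n - m) - a (n - m)‖
            + ‖b (n - (m+1)) + r (n - m) - b (n - m)‖
            + ‖a (n - m) - b (n - m)‖ := by
            rw [this]
            exact le_trans (norm_add_le _ _) (by gcongr; exact norm_sub_le _ _)
        _ ≤ lam + lam + 2 * m * lam := by gcongr
        _ = 2 * (m + 1 : ℕ) * lam := by push_cast; ring
  have := key n le_rfl
  simpa using this
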